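/- Let M be a smooth manifold with vector fields ξ_1,...,ξ_s and 1-forms η_1,...,η_s satisfying η_i(ξ_j) = δ_{ij}, and suppose for each l the 2-form dη_l satisfies i_{ξ_i} dη_l = 0 for all i (dη_l is basic in the directions ξ_i). Suppose further that whenever a vector field Z lies in the distribution spanned by ξ_1,...,ξ_s at each point, and η_l(Z) = 0 for all l, then Z = 0. If the brackets [ξ_i, ξ_j] lie in span{ξ_1,...,ξ_s} pointwise, then [ξ_i, ξ_j] = 0 for all i, j. -/

import Mathlib

private lemma fderiv_apply_const {E : Type*} [NormedAddCommGroup E] [NormedSpace ℝ E]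
    (η : E → (E →L[ℝ] ℝ)) (hη : ContDiff ℝ (⊤ : ℕ∞) η) (c : E) (p w : E) :
    fderiv ℝ (fun q => η q c) p w = (fderiv ℝ η p w) c := by
  rw [fderiv_clm_apply (hη.differentiable (by simp) p) (differentiableAt_const c)]
  simp

private lemma leibniz_zero {E : Type*} [NormedAddCommGroup E] [NormedSpace ℝ E]
    (η : E → (E →L[ℝ] ℝ)) (X : E → E) (hη : ContDiff ℝ (⊤ : ℕ∞) η) (hX : ContDiff ℝ (⊤ : ℕ∞) X)
    (hconst : ∃ c : ℝ, ∀ q, η q (X q) = c) (p w : E) :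
    (fderiv ℝ η p w) (X p) + η p (fderiv ℝ X p w) = 0 := by
  obtain ⟨c, hc⟩ := hconst
  have h0 : fderiv ℝ (fun q => η q (X q)) p = 0 := by
    have : (fun q => η q (X q)) = fun _ => c := funext hc
    rw [this, fderiv_fun_const]; rfl
  have h1 := fderiv_clm_apply (hη.differentiable (by simp) p) (hX.differentiable (by simp) p)
  have := congrArg (fun f => f w) (h0 ▸ h1)
  simpa [add_comm] using this.symm

/-- (Coordinate formulation of Proposition `com`.) Let `ξ₁,…,ξ_s` be smooth
vector fields and `η₁,…,η_s` smooth 1-forms with `η_i(ξ_j) = δ_{ij}` such that each `dη_l`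
satisfies `i_{ξ_i} dη_l = 0`.  Assume that any vector field `Z` lying pointwise in
`span{ξ₁,…,ξ_s}` with `η_l(Z) = 0` for all `l` vanishes.  If all brackets `[ξ_i, ξ_j]` lie
pointwise in `span{ξ₁,…,ξ_s}`, then `[ξ_i, ξ_j] = 0` for all `i, j`. -/
theorem stmt6 {E : Type*} [NormedAddCommGroup E] [NormedSpace ℝ E] {s : ℕ}
    (ξ : Fin s → E → E) (η : Fin s → E → (E →L[ℝ] ℝ))
    (hξ : ∀ i, ContDiff ℝ (⊤ : ℕ∞) (ξ i)) (hη : ∀ i, ContDiff ℝ (⊤ : ℕ∞) (η i))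
    (hδ : ∀ i j p, η i p (ξ j p) = if i = j then 1 else 0)
    (hbasic : ∀ l i p v,
      fderiv ℝ (fun q => η l q v) p (ξ i p)
        - fderiv ℝ (fun q => η l q (ξ i p)) p v = 0)
    (hnd : ∀ Z : E → E,
      (∀ p, Z p ∈ Submodule.span ℝ (Set.range fun i => ξ i p)) →
      (∀ l p, η l p (Z p) = 0) → ∀ p, Z p = 0)
    (hbrk : ∀ i j p,
      (fderiv ℝ (ξ j) p (ξ i p) - fderiv ℝ (ξ i) p (ξ j p)) ∈
        Submodule.span ℝ (Set.range fun k => ξ k p)) :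
    ∀ i j p, fderiv ℝ (ξ j) p (ξ i p) - fderiv ℝ (ξ i) p (ξ j p) = 0 := by
  intro i j
  refine hnd (fun p => fderiv ℝ (ξ j) p (ξ i p) - fderiv ℝ (ξ i) p (ξ j p))
    (hbrk i j) (fun l p => ?_)
  -- antisymmetry from hbasic
  have hb := hbasic l i p (ξ j p)
  rw [fderiv_apply_const (η l) (hη l) (ξ j p) p (ξ i p),
      fderiv_apply_const (η l) (hη l) (ξ i p) p (ξ j p), sub_eq_zero] at hb
  have hji := leibniz_zero (η l) (ξ j) (hη l) (hξ j)
    ⟨if l = j then 1 else 0, fun q => hδ l j q⟩ p (ξ i p)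
  have hij := leibniz_zero (η l) (ξ i) (hη l) (hξ i)
    ⟨if l = i then 1 else 0, fun q => hδ l i q⟩ p (ξ j p)
  have e1 : η l p (fderiv ℝ (ξ j) p (ξ i p)) = -(fderiv ℝ (η l) p (ξ i p)) (ξ j p) :=
    by linarith
  have e2 : η l p (fderiv ℝ (ξ i) p (ξ j p)) = -(fderiv ℝ (η l) p (ξ j p)) (ξ i p) :=
    by linarith
  rw [map_sub, e1, e2, hb]
  ring
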